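/- (Singular criterion) Let p^[π] ∈ I^[Σ] and let G^[Σ] be a labelled Gröbner basis of I^[Σ] up to signature s(π). If there exists a regular s-reduced element g^[γ] ∈ G^[Σ] with s(γ) = s(π), then p^[π] regular s-reduces to a normal form that is singular top s-reducible by G^[Σ]. -/

import Mathlib

/-!
Regular s-reduction strictly decreases the support of the polynomial part in the colex order,
which is well-founded, so `p^[π]` regular s-reduces to a normal form `q^[κ]`; regular reduction
preserves membership in `I^[Σ]` and the signature, so `s(κ) = s(π) = s(γ)`. The combination of
`q^[κ]` and `g^[γ]` cancelling their leading module terms has smaller signature and therefore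
s-reduces to zero; if its polynomial part were nonzero, its first reduction step would be a
regular reduction of `q^[κ]` or of `g^[γ]`. Hence `q` is a nonzero multiple of `g`, and `g^[γ]`
itself is a singular top reducer of `q^[κ]`.
-/

open Finsupp

/-- The free algebra `K⟨X⟩`, realized as the monoid algebra of the free monoid. -/
abbrev FreeAlg (K X : Type*) [Field K] := MonoidAlgebra K (FreeMonoid X)

/-- Module monomials `a εᵢ b` of the free bimodule of rank `r`. -/
structure MonMod (X : Type*) (r : ℕ) where
  left : FreeMonoid X
  idx : Fin r
  right : FreeMonoid X

/-- The free bimodule `Σ = (K⟨X⟩ ⊗ K⟨X⟩)^r`, realized as the span of module monomials. -/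
abbrev FreeBimod (K X : Type*) [Field K] (r : ℕ) := MonMod X r →₀ K

/-- Two-sided action of a pair of words on a module monomial: `a·(c εᵢ d)·b = (ac) εᵢ (db)`. -/
def act {X : Type*} {r : ℕ} (a b : FreeMonoid X) (μ : MonMod X r) : MonMod X r :=
  ⟨a * μ.left, μ.idx, μ.right * b⟩

/-- The monomial `w` as an element of the free algebra. -/
noncomputable def mon (K : Type*) [Field K] {X : Type*} (w : FreeMonoid X) : FreeAlg K X :=
  MonoidAlgebra.of K (FreeMonoid X) w

/-- The evaluation homomorphism `Σ → K⟨X⟩`, `εᵢ ↦ fᵢ`. -/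
noncomputable def evalS {K X : Type*} [Field K] {r : ℕ} (F : Fin r → FreeAlg K X)
    (α : FreeBimod K X r) : FreeAlg K X :=
  α.sum fun μ c => c • (mon K μ.left * F μ.idx * mon K μ.right)

section Orders

variable {K X : Type*} [Field K] [LinearOrder (FreeMonoid X)] {r : ℕ}
  [LinearOrder (MonMod X r)]

/-- The signature of a module element: the largest module monomial of its support
(`⊥` for the zero element). -/
noncomputable def sigW (α : FreeBimod K X r) : WithBot (MonMod X r) := α.support.max

/-- The leading monomial of a nonzero polynomial (junk value `1` for `0`). -/
noncomputable def lmon (p : FreeAlg K X) : FreeMonoid X :=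
  if h : p.coeff.support.Nonempty then p.coeff.support.max' h else 1

/-- The leading coefficient. -/
noncomputable def lcoeff (p : FreeAlg K X) : K := p.coeff (lmon p)

/-- The leading term. -/
noncomputable def lterm (p : FreeAlg K X) : FreeAlg K X :=
  MonoidAlgebra.single (lmon p) (lcoeff p)

/-- `f^[α]` is top s-reducible by the set `G^[Σ]`. -/
def TopSRed (G : Set (FreeAlg K X × FreeBimod K X r)) (f : FreeAlg K X)
    (α : FreeBimod K X r) : Prop :=
  ∃ g γ, (g, γ) ∈ G ∧ g ≠ 0 ∧ ∃ a b : FreeMonoid X,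
    a * lmon g * b = lmon f ∧ WithBot.map (act a b) (sigW γ) ≤ sigW α

/-- `f^[α]` is singular top s-reducible by `G^[Σ]`. -/
def SingTopSRed (G : Set (FreeAlg K X × FreeBimod K X r)) (f : FreeAlg K X)
    (α : FreeBimod K X r) : Prop :=
  f ≠ 0 ∧ ∃ g γ, (g, γ) ∈ G ∧ g ≠ 0 ∧ ∃ a b : FreeMonoid X,
    a * lmon g * b = lmon f ∧ WithBot.map (act a b) (sigW γ) = sigW α

/-- `f^[α]` admits a regular s-reduction by `G^[Σ]`. -/
def RegSRedible (G : Set (FreeAlg K X × FreeBimod K X r)) (f : FreeAlg K X)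
    (α : FreeBimod K X r) : Prop :=
  ∃ g γ, (g, γ) ∈ G ∧ g ≠ 0 ∧ ∃ a b : FreeMonoid X,
    a * lmon g * b ∈ f.coeff.support ∧ WithBot.map (act a b) (sigW γ) < sigW α

/-- `f^[α]` admits a regular *top* s-reduction by `G^[Σ]`. -/
def RegTopSRedible (G : Set (FreeAlg K X × FreeBimod K X r)) (f : FreeAlg K X)
    (α : FreeBimod K X r) : Prop :=
  f ≠ 0 ∧ ∃ g γ, (g, γ) ∈ G ∧ g ≠ 0 ∧ ∃ a b : FreeMonoid X,
    a * lmon g * b = lmon f ∧ WithBot.map (act a b) (sigW γ) < sigW α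

/-- Result of one s-reduction step of `f^[α]` by `a g^[γ] b`. -/
noncomputable def sredResult (f : FreeAlg K X) (α : FreeBimod K X r)
    (g : FreeAlg K X) (γ : FreeBimod K X r) (a b : FreeMonoid X) :
    FreeAlg K X × FreeBimod K X r :=
  (f - (f.coeff (a * lmon g * b) * (lcoeff g)⁻¹) • (mon K a * g * mon K b),
   α - (f.coeff (a * lmon g * b) * (lcoeff g)⁻¹) • Finsupp.mapDomain (act a b) γ)

/-- One s-reduction step by `G^[Σ]`. -/
def SRedStep (G : Set (FreeAlg K X × FreeBimod K X r))
    (p q : FreeAlg K X × FreeBimod K X r) : Prop :=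
  ∃ g γ, (g, γ) ∈ G ∧ g ≠ 0 ∧ ∃ a b : FreeMonoid X,
    a * lmon g * b ∈ p.1.coeff.support ∧ WithBot.map (act a b) (sigW γ) ≤ sigW p.2 ∧
    q = sredResult p.1 p.2 g γ a b

/-- One *regular* s-reduction step by `G^[Σ]`. -/
def RegSRedStep (G : Set (FreeAlg K X × FreeBimod K X r))
    (p q : FreeAlg K X × FreeBimod K X r) : Prop :=
  ∃ g γ, (g, γ) ∈ G ∧ g ≠ 0 ∧ ∃ a b : FreeMonoid X,
    a * lmon g * b ∈ p.1.coeff.support ∧ WithBot.map (act a b) (sigW γ) < sigW p.2 ∧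
    q = sredResult p.1 p.2 g γ a b

/-- `p` s-reduces to zero by `G^[Σ]`. -/
def SRedToZero (G : Set (FreeAlg K X × FreeBimod K X r))
    (p : FreeAlg K X × FreeBimod K X r) : Prop :=
  ∃ σ : FreeBimod K X r, Relation.ReflTransGen (SRedStep G) p (0, σ)

/-- `p` regular s-reduces to zero by `G^[Σ]`. -/
def RegSRedToZero (G : Set (FreeAlg K X × FreeBimod K X r))
    (p : FreeAlg K X × FreeBimod K X r) : Prop :=
  ∃ σ : FreeBimod K X r, Relation.ReflTransGen (RegSRedStep G) p (0, σ)

/-- `G^[Σ] ⊆ I^[Σ]`: labelled polynomials with nonzero polynomial part. -/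
def InLab (F : Fin r → FreeAlg K X) (G : Set (FreeAlg K X × FreeBimod K X r)) : Prop :=
  ∀ p ∈ G, p.1 = evalS F p.2 ∧ p.1 ≠ 0

/-- `G^[Σ]` is a labelled Gröbner basis of `I^[Σ]`. -/
def LabGB (F : Fin r → FreeAlg K X) (G : Set (FreeAlg K X × FreeBimod K X r)) : Prop :=
  InLab F G ∧ ∀ (f : FreeAlg K X) (α : FreeBimod K X r), f = evalS F α → SRedToZero G (f, α)

/-- `G^[Σ]` is a labelled Gröbner basis of `I^[Σ]` up to signature `σ`. -/
def LabGBUpTo (F : Fin r → FreeAlg K X) (G : Set (FreeAlg K X × FreeBimod K X r))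
    (σ : MonMod X r) : Prop :=
  InLab F G ∧ ∀ (f : FreeAlg K X) (α : FreeBimod K X r), f = evalS F α →
    sigW α < (σ : WithBot (MonMod X r)) → SRedToZero G (f, α)

/-- `G^[Σ]` is a *minimal* labelled Gröbner basis of `I^[Σ]`. -/
def MinLabGB (F : Fin r → FreeAlg K X) (G : Set (FreeAlg K X × FreeBimod K X r)) : Prop :=
  LabGB F G ∧ ∀ p ∈ G, ¬ TopSRed (G \ {p}) p.1 p.2

end Orders

section FreeAlgebra

variable {K X : Type*} [Field K]

theorem mul_mul_injective (a b : FreeMonoid X) :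
    Function.Injective (fun u : FreeMonoid X => a * u * b) :=
  fun _ _ h => mul_left_cancel (mul_right_cancel h)

theorem coeff_mon_mul_mul_mon (a b : FreeMonoid X) (g : FreeAlg K X) :
    (mon K a * g * mon K b).coeff = g.coeff.mapDomain (fun u => a * u * b) := by
  induction g using MonoidAlgebra.induction with
  | zero => simp
  | single_add w c f _ _ ih =>
    rw [mul_add, add_mul, MonoidAlgebra.coeff_add, MonoidAlgebra.coeff_add, mapDomain_add, ih,
      MonoidAlgebra.coeff_single, mapDomain_single]
    simp [mon, MonoidAlgebra.single_mul_single]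

theorem coeff_mon_mul_mul_mon_apply (a b : FreeMonoid X) (g : FreeAlg K X) (u : FreeMonoid X) :
    (mon K a * g * mon K b).coeff (a * u * b) = g.coeff u := by
  rw [coeff_mon_mul_mul_mon]
  exact mapDomain_apply (mul_mul_injective a b) g.coeff u

theorem mem_support_coeff_mon_mul_mul_mon {a b v : FreeMonoid X} {g : FreeAlg K X} :
    v ∈ (mon K a * g * mon K b).coeff.support ↔ ∃ u ∈ g.coeff.support, a * u * b = v := by
  classical
  rw [coeff_mon_mul_mul_mon, mapDomain_support_of_injective (mul_mul_injective a b),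
    Finset.mem_image]

theorem evalS_eq_linearCombination {r : ℕ} (F : Fin r → FreeAlg K X) (α : FreeBimod K X r) :
    evalS F α = linearCombination K (fun μ => mon K μ.left * F μ.idx * mon K μ.right) α :=
  (linearCombination_apply K α).symm

theorem evalS_sub {r : ℕ} (F : Fin r → FreeAlg K X) (α β : FreeBimod K X r) :
    evalS F (α - β) = evalS F α - evalS F β := by
  simp only [evalS_eq_linearCombination, map_sub]

theorem evalS_smul {r : ℕ} (F : Fin r → FreeAlg K X) (c : K) (α : FreeBimod K X r) :
    evalS F (c • α) = c • evalS F α := by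
  simp only [evalS_eq_linearCombination, map_smul]

theorem evalS_mapDomain_act {r : ℕ} (F : Fin r → FreeAlg K X) (a b : FreeMonoid X)
    (γ : FreeBimod K X r) :
    evalS F (γ.mapDomain (act a b)) = mon K a * evalS F γ * mon K b := by
  have mon_mul : ∀ u v : FreeMonoid X, mon K (u * v) = mon K u * mon K v := map_mul _
  rw [evalS_eq_linearCombination, evalS_eq_linearCombination, linearCombination_mapDomain]
  simp only [linearCombination_apply, Finsupp.sum, Finset.mul_sum, Finset.sum_mul,
    Function.comp_apply, act, mon_mul, mul_smul_comm, smul_mul_assoc, mul_assoc]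

theorem act_one_one {r : ℕ} : act (1 : FreeMonoid X) 1 = (id : MonMod X r → MonMod X r) := by
  funext μ
  simp [act]

end FreeAlgebra

section LeadingMonomial

variable {K X : Type*} [Field K] [LinearOrder (FreeMonoid X)]

theorem lmon_mem_support {f : FreeAlg K X} (hf : f ≠ 0) : lmon f ∈ f.coeff.support := by
  rw [lmon, dif_pos (support_nonempty_iff.2 (by simpa using hf))]
  exact Finset.max'_mem _ _

theorem le_lmon {f : FreeAlg K X} {v : FreeMonoid X} (hv : v ∈ f.coeff.support) :
    v ≤ lmon f := by
  rw [lmon, dif_pos ⟨v, hv⟩]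
  exact Finset.le_max' _ _ hv

theorem lcoeff_ne_zero {f : FreeAlg K X} (hf : f ≠ 0) : lcoeff f ≠ 0 :=
  mem_support_iff.1 (lmon_mem_support hf)

theorem lmon_smul {c : K} (hc : c ≠ 0) (f : FreeAlg K X) : lmon (c • f) = lmon f := by
  simp only [lmon, MonoidAlgebra.coeff_smul, support_smul_eq hc]

theorem coeff_mon_mul_mul_mon_eq_zero_of_lt
    (hmon : ∀ a b u v : FreeMonoid X, u ≤ v → a * u * b ≤ a * v * b)
    (a b : FreeMonoid X) (g : FreeAlg K X) {v : FreeMonoid X} (hv : a * lmon g * b < v) :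
    (mon K a * g * mon K b).coeff v = 0 := by
  by_contra h
  obtain ⟨u, hu, rfl⟩ := mem_support_coeff_mon_mul_mul_mon.1 (mem_support_iff.2 h)
  exact (hmon a b _ _ (le_lmon hu)).not_gt hv

end LeadingMonomial

section Signature

variable {K X : Type*} [Field K] {r : ℕ} [LinearOrder (MonMod X r)]

theorem le_sigW {α : FreeBimod K X r} {μ : MonMod X r} (h : μ ∈ α.support) :
    (μ : WithBot (MonMod X r)) ≤ sigW α :=
  Finset.le_max h

theorem mem_support_of_sigW_eq {α : FreeBimod K X r} {μ : MonMod X r} (h : sigW α = μ) :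
    μ ∈ α.support :=
  Finset.mem_of_max h

theorem sigW_smul_le (c : K) (α : FreeBimod K X r) : sigW (c • α) ≤ sigW α :=
  Finset.max_mono support_smul

theorem sigW_sub_le (α β : FreeBimod K X r) : sigW (α - β) ≤ sigW α ⊔ sigW β :=
  (Finset.max_mono support_sub).trans_eq Finset.max_union

theorem sigW_sub_of_lt {α β : FreeBimod K X r} (h : sigW β < sigW α) :
    sigW (α - β) = sigW α := by
  obtain ⟨μ, hμ⟩ := WithBot.ne_bot_iff_exists.1 h.ne_bot
  refine le_antisymm ((sigW_sub_le α β).trans (sup_le le_rfl h.le)) (hμ ▸ le_sigW ?_)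
  have hβμ : β μ = 0 := notMem_support_iff.1 (Finset.notMem_of_max_lt_coe (h.trans_eq hμ.symm))
  rw [mem_support_iff, Finsupp.sub_apply, hβμ, sub_zero]
  exact mem_support_iff.1 (mem_support_of_sigW_eq hμ.symm)

theorem sigW_sub_smul_lt {α γ : FreeBimod K X r} {μ : MonMod X r} (hα : sigW α = μ)
    (hγ : sigW γ = μ) : sigW (α - (α μ * (γ μ)⁻¹) • γ) < μ := by
  have hγμ : γ μ ≠ 0 := mem_support_iff.1 (mem_support_of_sigW_eq hγ)
  refine Finset.sup_lt_iff (WithBot.bot_lt_coe μ) |>.2 fun ν hν => ?_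
  have hle : sigW (α - (α μ * (γ μ)⁻¹) • γ) ≤ μ :=
    (sigW_sub_le _ _).trans (sup_le hα.le ((sigW_smul_le _ _).trans hγ.le))
  refine lt_of_le_of_ne ((le_sigW hν).trans hle) fun hνμ => mem_support_iff.1 hν ?_
  rw [WithBot.coe_inj.1 hνμ, Finsupp.sub_apply, Finsupp.smul_apply, smul_eq_mul,
    inv_mul_cancel_right₀ hγμ, sub_self]

theorem sigW_mapDomain_act_le
    (hmod : ∀ (a b : FreeMonoid X) (μ ν : MonMod X r), μ ≤ ν → act a b μ ≤ act a b ν)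
    (a b : FreeMonoid X) (γ : FreeBimod K X r) :
    sigW (γ.mapDomain (act a b)) ≤ WithBot.map (act a b) (sigW γ) := by
  refine Finset.max_le fun μ hμ => ?_
  obtain ⟨ν, hν, rfl⟩ := Finset.mem_image.1 (mapDomain_support hμ)
  obtain ⟨ν₀, hν₀⟩ := Finset.max_of_mem hν
  rw [sigW, hν₀, WithBot.map_coe, WithBot.coe_le_coe]
  exact hmod a b _ _ (Finset.le_max_of_eq hν hν₀)

end Signature

section Reduction

variable {K X : Type*} [Field K] {r : ℕ} [LinearOrder (FreeMonoid X)]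

open Classical in
noncomputable def supportColex (f : FreeAlg K X) : Colex (FreeMonoid X →₀ ℕ) :=
  toColex (f.coeff.mapRange (fun c => if c = 0 then 0 else 1) (by simp))

theorem supportColex_lt_of {f f' : FreeAlg K X} {w : FreeMonoid X} (hw : w ∈ f.coeff.support)
    (hw' : f'.coeff w = 0) (habove : ∀ v, w < v → f'.coeff v = f.coeff v) :
    supportColex f' < supportColex f := by
  refine Finsupp.Colex.lt_iff.2 ⟨w, fun v hv => ?_, ?_⟩ <;>
    simp only [supportColex, ofColex_toColex, mapRange_apply]
  · rw [habove v hv]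
  · rw [if_pos hw', if_neg (mem_support_iff.1 hw)]
    exact Nat.zero_lt_one

theorem supportColex_sredResult_lt
    (hmon : ∀ a b u v : FreeMonoid X, u ≤ v → a * u * b ≤ a * v * b)
    {f g : FreeAlg K X} (α γ : FreeBimod K X r) {a b : FreeMonoid X} (hg : g ≠ 0)
    (hmem : a * lmon g * b ∈ f.coeff.support) :
    supportColex (sredResult f α g γ a b).1 < supportColex f := by
  refine supportColex_lt_of hmem ?_ fun v hv => ?_ <;>
    simp only [sredResult, MonoidAlgebra.coeff_sub, MonoidAlgebra.coeff_smul, Finsupp.sub_apply,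
      Finsupp.smul_apply, smul_eq_mul]
  · rw [coeff_mon_mul_mul_mon_apply, ← lcoeff, inv_mul_cancel_right₀ (lcoeff_ne_zero hg),
      sub_self]
  · rw [coeff_mon_mul_mul_mon_eq_zero_of_lt hmon a b g hv, mul_zero, sub_zero]

theorem evalS_sredResult {F : Fin r → FreeAlg K X} {f g : FreeAlg K X} {α γ : FreeBimod K X r}
    (hf : f = evalS F α) (hg : g = evalS F γ) (a b : FreeMonoid X) :
    (sredResult f α g γ a b).1 = evalS F (sredResult f α g γ a b).2 := by
  simp only [sredResult, evalS_sub, evalS_smul, evalS_mapDomain_act, ← hf, ← hg]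

variable [LinearOrder (MonMod X r)] {G : Set (FreeAlg K X × FreeBimod K X r)}

theorem sigW_sredResult
    (hmod : ∀ (a b : FreeMonoid X) (μ ν : MonMod X r), μ ≤ ν → act a b μ ≤ act a b ν)
    (f g : FreeAlg K X) {α γ : FreeBimod K X r} {a b : FreeMonoid X}
    (h : WithBot.map (act a b) (sigW γ) < sigW α) :
    sigW (sredResult f α g γ a b).2 = sigW α :=
  sigW_sub_of_lt ((sigW_smul_le _ _).trans_lt ((sigW_mapDomain_act_le hmod a b γ).trans_lt h))

theorem evalS_of_reflTransGen_regSRedStep {F : Fin r → FreeAlg K X} (hG : InLab F G)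
    {x y : FreeAlg K X × FreeBimod K X r} (h : Relation.ReflTransGen (RegSRedStep G) x y)
    (hx : x.1 = evalS F x.2) : y.1 = evalS F y.2 := by
  induction h with
  | refl => exact hx
  | tail _ hstep ih =>
    obtain ⟨g, γ, hg, -, a, b, -, -, rfl⟩ := hstep
    exact evalS_sredResult ih (hG _ hg).1 a b

theorem sigW_of_reflTransGen_regSRedStep
    (hmod : ∀ (a b : FreeMonoid X) (μ ν : MonMod X r), μ ≤ ν → act a b μ ≤ act a b ν)
    {x y : FreeAlg K X × FreeBimod K X r} (h : Relation.ReflTransGen (RegSRedStep G) x y) :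
    sigW y.2 = sigW x.2 := by
  induction h with
  | refl => rfl
  | tail _ hstep ih =>
    obtain ⟨g, γ, -, -, a, b, -, hlt, rfl⟩ := hstep
    exact (sigW_sredResult hmod _ g hlt).trans ih

theorem exists_regSRed_normalForm [WellFoundedLT (FreeMonoid X)]
    (hmon : ∀ a b u v : FreeMonoid X, u ≤ v → a * u * b ≤ a * v * b)
    (G : Set (FreeAlg K X × FreeBimod K X r)) (x : FreeAlg K X × FreeBimod K X r) :
    ∃ y, Relation.ReflTransGen (RegSRedStep G) x y ∧ ¬ RegSRedible G y.1 y.2 := by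
  obtain ⟨y, hxy, hmin⟩ := (InvImage.wf (fun y => supportColex y.1) wellFounded_lt).has_min
    {y | Relation.ReflTransGen (RegSRedStep G) x y} ⟨x, .refl⟩
  refine ⟨y, hxy, fun ⟨g, γ, hg, hg0, a, b, hmem, hlt⟩ => ?_⟩
  exact hmin (sredResult y.1 y.2 g γ a b) (hxy.tail ⟨g, γ, hg, hg0, a, b, hmem, hlt, rfl⟩)
    (supportColex_sredResult_lt hmon y.2 γ hg0 hmem)

theorem SRedToZero.exists_sRedStep {x : FreeAlg K X × FreeBimod K X r} (h : SRedToZero G x)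
    (hx : x.1 ≠ 0) : ∃ y, SRedStep G x y := by
  obtain ⟨σ, h⟩ := h
  rcases h.cases_head with h | ⟨y, hy, -⟩
  · exact absurd (congrArg Prod.fst h) hx
  · exact ⟨y, hy⟩

theorem regSRedible_or_of_sRedStep_sub_smul {f g : FreeAlg K X} {α β γ : FreeBimod K X r}
    {c : K} {y : FreeAlg K X × FreeBimod K X r} (h : SRedStep G (f - c • g, β) y)
    (hβ : sigW β < sigW α) (hγ : sigW γ = sigW α) :
    RegSRedible G f α ∨ RegSRedible G g γ := by
  obtain ⟨g', γ', hg', hg'0, a, b, hmem, hsig, -⟩ := h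
  have hreg := hsig.trans_lt hβ
  rw [MonoidAlgebra.coeff_sub, MonoidAlgebra.coeff_smul] at hmem
  rcases Finset.mem_union.1 (support_sub hmem) with hf | hg
  · exact .inl ⟨g', γ', hg', hg'0, a, b, hf, hreg⟩
  · exact .inr ⟨g', γ', hg', hg'0, a, b, support_smul hg, hγ ▸ hreg⟩

theorem exists_eq_smul_of_sigW_eq {F : Fin r → FreeAlg K X} {σ : MonMod X r}
    (hGB : LabGBUpTo F G σ) {f g : FreeAlg K X} {α γ : FreeBimod K X r}
    (hf : f = evalS F α) (hg : g = evalS F γ) (hα : sigW α = σ) (hγ : sigW γ = σ)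
    (hfred : ¬ RegSRedible G f α) (hgred : ¬ RegSRedible G g γ) :
    ∃ c : K, c ≠ 0 ∧ f = c • g := by
  have hασ : α σ ≠ 0 := mem_support_iff.1 (mem_support_of_sigW_eq hα)
  have hγσ : γ σ ≠ 0 := mem_support_iff.1 (mem_support_of_sigW_eq hγ)
  refine ⟨α σ * (γ σ)⁻¹, mul_ne_zero hασ (inv_ne_zero hγσ), ?_⟩
  by_contra hne
  replace hne := sub_ne_zero.2 hne
  have hlt := sigW_sub_smul_lt hα hγ
  have hI : f - (α σ * (γ σ)⁻¹) • g = evalS F (α - (α σ * (γ σ)⁻¹) • γ) := by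
    rw [evalS_sub, evalS_smul, ← hf, ← hg]
  obtain ⟨y, hy⟩ := (hGB.2 _ _ hI hlt).exists_sRedStep hne
  exact (regSRedible_or_of_sRedStep_sub_smul hy (hlt.trans_eq hα.symm) (hγ.trans hα.symm)).elim
    hfred hgred

theorem singTopSRed_smul {g : FreeAlg K X} {γ α : FreeBimod K X r} (hg : (g, γ) ∈ G)
    (hg0 : g ≠ 0) {c : K} (hc : c ≠ 0) (h : sigW γ = sigW α) : SingTopSRed G (c • g) α :=
  ⟨smul_ne_zero hc hg0, g, γ, hg, hg0, 1, 1, by rw [one_mul, mul_one, lmon_smul hc],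
    by rw [act_one_one, WithBot.map_id, id, h]⟩

end Reduction

theorem singular_criterion_general {K X : Type*} [Field K] {r : ℕ}
    [LinearOrder (FreeMonoid X)] [WellFoundedLT (FreeMonoid X)]
    [LinearOrder (MonMod X r)]
    (hmon : ∀ a b u v : FreeMonoid X, u ≤ v → a * u * b ≤ a * v * b)
    (hmod : ∀ (a b : FreeMonoid X) (μ ν : MonMod X r), μ ≤ ν → act a b μ ≤ act a b ν)
    (F : Fin r → FreeAlg K X) (G : Set (FreeAlg K X × FreeBimod K X r))
    (p : FreeAlg K X) (π : FreeBimod K X r) (sπ : MonMod X r)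
    (hp : p = evalS F π) (hsπ : sigW π = (sπ : WithBot (MonMod X r)))
    (hGB : LabGBUpTo F G sπ)
    (g : FreeAlg K X) (γ : FreeBimod K X r) (hgG : (g, γ) ∈ G)
    (hgred : ¬ RegSRedible G g γ)
    (hgs : sigW γ = (sπ : WithBot (MonMod X r))) :
    ∃ q : FreeAlg K X × FreeBimod K X r,
      Relation.ReflTransGen (RegSRedStep G) (p, π) q ∧
      ¬ RegSRedible G q.1 q.2 ∧ SingTopSRed G q.1 q.2 := by
  obtain ⟨q, hpq, hq⟩ := exists_regSRed_normalForm hmon G (p, π)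
  have hqs : sigW q.2 = sπ := (sigW_of_reflTransGen_regSRedStep hmod hpq).trans hsπ
  obtain ⟨hg, hg0⟩ := hGB.1 _ hgG
  obtain ⟨c, hc, hqc⟩ := exists_eq_smul_of_sigW_eq hGB
    (evalS_of_reflTransGen_regSRedStep hGB.1 hpq hp) hg hqs hgs hq hgred
  exact ⟨q, hpq, hq, hqc ▸ singTopSRed_smul hgG hg0 hc (hgs.trans hqs.symm)⟩

/-- **Singular criterion.** Let `p^[π] ∈ I^[Σ]` and let `G^[Σ]` be a labelled Gröbner
basis of `I^[Σ]` up to signature `s(π)`. If `G^[Σ]` contains a regular s-reduced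
element `g^[γ]` with `s(γ) = s(π)`, then `p^[π]` regular s-reduces to a normal form
that is singular top s-reducible by `G^[Σ]`. -/
theorem singular_criterion {K X : Type*} [Field K] {r : ℕ}
    [LinearOrder (FreeMonoid X)] [WellFoundedLT (FreeMonoid X)]
    [LinearOrder (MonMod X r)] [WellFoundedLT (MonMod X r)]
    (hmon : ∀ a b u v : FreeMonoid X, u ≤ v → a * u * b ≤ a * v * b)
    (hmod : ∀ (a b : FreeMonoid X) (μ ν : MonMod X r), μ ≤ ν → act a b μ ≤ act a b ν)
    (hcomp : ∀ (u v : FreeMonoid X) (i : Fin r),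
      (u ≤ v ↔ (⟨u, i, 1⟩ : MonMod X r) ≤ ⟨v, i, 1⟩) ∧
      (u ≤ v ↔ (⟨1, i, u⟩ : MonMod X r) ≤ ⟨1, i, v⟩))
    (F : Fin r → FreeAlg K X) (G : Set (FreeAlg K X × FreeBimod K X r))
    (p : FreeAlg K X) (π : FreeBimod K X r) (sπ : MonMod X r)
    (hp : p = evalS F π) (hsπ : sigW π = (sπ : WithBot (MonMod X r)))
    (hGB : LabGBUpTo F G sπ)
    (g : FreeAlg K X) (γ : FreeBimod K X r) (hgG : (g, γ) ∈ G)
    (hgred : ¬ RegSRedible G g γ)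
    (hgs : sigW γ = (sπ : WithBot (MonMod X r))) :
    ∃ q : FreeAlg K X × FreeBimod K X r,
      Relation.ReflTransGen (RegSRedStep G) (p, π) q ∧
      ¬ RegSRedible G q.1 q.2 ∧ SingTopSRed G q.1 q.2 :=
  singular_criterion_general hmon hmod F G p π sπ hp hsπ hGB g γ hgG hgred hgs
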